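/- If a ∈ (−π²/2, 0), then v0(a) < 0; that is, the supremum of the real parts of the complex solutions of λ − a ∫_{−1}^0 e^{λu} du = 0 is strictly negative. -/

import Mathlib

/-!
For `z ≠ 0` one has `h_a(z) = (z² − a(1 − e^{−z})) / z`. If `Re z ≥ 0` then
`|z|² ≤ 2|a| < π²`, so `|Im z| < π`, and the imaginary part `2xy = a e^{−x} sin y` of
`z² = a(1 − e^{−z})` has sides of opposite signs unless `y = 0`, which forces `z = 0`.
The roots with `Re z ≥ −1` form a compact set, so their real parts stay below some `q < 0`.
Since `sSup ∅ = 0`, one also needs a root: at `c = −L + iy` with `y ≡ π (mod 2π)` large and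
`e^L = y² / |a|`, the linear Taylor term of `z² − a(1 − e^{−z})` dominates on the circle of
radius `1/4`, and the minimum modulus principle gives a zero inside.
-/

open MeasureTheory Real

/-- The characteristic function `h_a(λ) = λ − a ∫_{−1}^0 e^{λu} du`. -/
noncomputable def charFn (a : ℝ) (lam : ℂ) : ℂ :=
  lam - a * ∫ u in (-1:ℝ)..0, Complex.exp (lam * u)

/-- The set `Λ_a` of complex solutions of the characteristic equation. -/
def charRoots (a : ℝ) : Set ℂ := {lam | charFn a lam = 0}

/-- `v₀(a) = sup{Re λ : λ ∈ Λ_a}`. -/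
noncomputable def v0 (a : ℝ) : ℝ := sSup (Complex.re '' charRoots a)

lemma mul_sin_pos_of_abs_lt_pi {y : ℝ} (h0 : y ≠ 0) (hπ : |y| < π) : 0 < y * Real.sin y := by
  rcases h0.lt_or_gt with hy | hy
  · have := Real.sin_pos_of_pos_of_lt_pi (neg_pos.mpr hy) (by linarith [neg_abs_le y])
    rw [Real.sin_neg] at this
    nlinarith
  · exact mul_pos hy (Real.sin_pos_of_pos_of_lt_pi hy (by linarith [le_abs_self y]))

lemma exists_mem_ball_eq_zero_of_norm_lt {f : ℂ → ℂ} {c : ℂ} {r : ℝ} (hr : 0 < r)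
    (hf : DiffContOnCl ℂ f (Metric.ball c r)) (h : ∀ w ∈ Metric.sphere c r, ‖f c‖ < ‖f w‖) :
    ∃ z ∈ Metric.ball c r, f z = 0 := by
  by_contra! hball
  have hne : ∀ z ∈ Metric.closedBall c r, f z ≠ 0 := by
    intro z hz
    rcases (Metric.mem_closedBall.mp hz).lt_or_eq with hlt | heq
    · exact hball z (Metric.mem_ball.mpr hlt)
    · exact norm_pos_iff.mp ((norm_nonneg _).trans_lt (h z (Metric.mem_sphere.mpr heq)))
  -- maximum modulus principle for `1 / f`
  have hinv : DiffContOnCl ℂ (fun z => (f z)⁻¹) (Metric.ball c r) :=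
    hf.inv fun z hz => hne z (by rwa [closure_ball c hr.ne'] at hz)
  obtain ⟨w, hw, hmax⟩ := Complex.exists_mem_frontier_isMaxOn_norm Metric.isBounded_ball
    ⟨c, Metric.mem_ball_self hr⟩ hinv
  rw [frontier_ball c hr.ne'] at hw
  have hc := hmax (subset_closure (Metric.mem_ball_self hr))
  simp only [Set.mem_ofPred_eq, Function.comp_apply, norm_inv] at hc
  have hfc : 0 < ‖f c‖ := norm_pos_iff.mpr (hne c (Metric.mem_closedBall_self hr.le))
  exact (h w hw).not_ge ((inv_le_inv₀ hfc (hfc.trans (h w hw))).mp hc)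

lemma IsCompact.exists_lt_forall_le_of_forall_lt {X : Type*} [TopologicalSpace X] {K : Set X}
    (hK : IsCompact K) {f : X → ℝ} (hf : ContinuousOn f K) {t : ℝ} (h : ∀ x ∈ K, f x < t) :
    ∃ q < t, ∀ x ∈ K, f x ≤ q := by
  rcases K.eq_empty_or_nonempty with rfl | hne
  · exact ⟨t - 1, by linarith, by simp⟩
  · obtain ⟨x, hx, hmax⟩ := hK.exists_isMaxOn hne hf
    exact ⟨f x, h x hx, hmax⟩

noncomputable def charNum (a : ℝ) (z : ℂ) : ℂ := z ^ 2 - a * (1 - Complex.exp (-z))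

lemma charFn_zero (a : ℝ) : charFn a 0 = -a := by
  simp [charFn]

lemma charFn_eq_charNum_div (a : ℝ) {z : ℂ} (hz : z ≠ 0) : charFn a z = charNum a z / z := by
  rw [charFn, integral_exp_mul_complex hz, charNum]
  field_simp
  simp only [Complex.ofReal_zero, mul_zero, Complex.exp_zero, Complex.ofReal_neg,
    Complex.ofReal_one, mul_neg, mul_one]

lemma continuous_charFn (a : ℝ) : Continuous (charFn a) := by
  have : Continuous fun lam : ℂ => ∫ u in (-1:ℝ)..0, Complex.exp (lam * u) :=
    intervalIntegral.continuous_parametric_intervalIntegral_of_continuous' (by fun_prop) _ _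
  unfold charFn
  fun_prop

lemma isClosed_charRoots (a : ℝ) : IsClosed (charRoots a) :=
  isClosed_eq (continuous_charFn a) continuous_const

lemma charNum_eq_zero_of_mem_charRoots {a : ℝ} {z : ℂ} (hz : z ∈ charRoots a) :
    charNum a z = 0 := by
  rcases eq_or_ne z 0 with rfl | hz0
  · simp [charNum]
  · simpa [charRoots, charFn_eq_charNum_div a hz0, hz0] using hz

lemma mem_charRoots_of_charNum_eq_zero {a : ℝ} {z : ℂ} (hz : z ≠ 0) (h : charNum a z = 0) :
    z ∈ charRoots a := by
  simp [charRoots, charFn_eq_charNum_div a hz, h]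

lemma zero_notMem_charRoots {a : ℝ} (ha : a ≠ 0) : (0 : ℂ) ∉ charRoots a := by
  simpa [charRoots, charFn_zero] using ha

section RootsOfCharNum

variable {a : ℝ} {z : ℂ}

lemma sq_eq_of_charNum_eq_zero (h : charNum a z = 0) : z ^ 2 = a * (1 - Complex.exp (-z)) :=
  sub_eq_zero.mp h

lemma sq_norm_eq_of_charNum_eq_zero (h : charNum a z = 0) :
    ‖z‖ ^ 2 = |a| * ‖1 - Complex.exp (-z)‖ := by
  rw [← norm_pow, sq_eq_of_charNum_eq_zero h, norm_mul, Complex.norm_real, Real.norm_eq_abs]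

lemma re_sq_sub_im_sq_of_charNum_eq_zero (h : charNum a z = 0) :
    z.re ^ 2 - z.im ^ 2 = a * (1 - Real.exp (-z.re) * Real.cos z.im) := by
  have := congrArg Complex.re (sq_eq_of_charNum_eq_zero h)
  simp only [sq, Complex.mul_re, Complex.ofReal_re, Complex.ofReal_im, Complex.sub_re,
    Complex.sub_im, Complex.one_re, Complex.one_im, Complex.exp_re, Complex.exp_im,
    Complex.neg_re, Complex.neg_im, Real.cos_neg] at this
  linarith

lemma two_mul_re_mul_im_of_charNum_eq_zero (h : charNum a z = 0) :
    2 * z.re * z.im = a * (Real.exp (-z.re) * Real.sin z.im) := by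
  have := congrArg Complex.im (sq_eq_of_charNum_eq_zero h)
  simp only [sq, Complex.mul_im, Complex.ofReal_re, Complex.ofReal_im, Complex.sub_re,
    Complex.sub_im, Complex.one_re, Complex.one_im, Complex.exp_re, Complex.exp_im,
    Complex.neg_re, Complex.neg_im, Real.sin_neg] at this
  linarith

lemma norm_sq_le_of_charNum_eq_zero {x : ℝ} (h : charNum a z = 0) (hre : x ≤ z.re) :
    ‖z‖ ^ 2 ≤ |a| * (1 + Real.exp (-x)) := by
  have hexp : ‖1 - Complex.exp (-z)‖ ≤ 1 + Real.exp (-x) := by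
    calc ‖1 - Complex.exp (-z)‖ ≤ ‖(1 : ℂ)‖ + ‖Complex.exp (-z)‖ := norm_sub_le _ _
      _ ≤ 1 + Real.exp (-x) := by
        rw [norm_one, Complex.norm_exp, Complex.neg_re]
        gcongr
  rw [sq_norm_eq_of_charNum_eq_zero h]
  gcongr

lemma re_neg_of_charNum_eq_zero (ha₁ : -(π ^ 2) / 2 < a) (ha₂ : a < 0) (hz : z ≠ 0)
    (h : charNum a z = 0) : z.re < 0 := by
  by_contra! hre
  have him_lt : |z.im| < π := by
    have hnorm : ‖z‖ ^ 2 < π ^ 2 := by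
      have := norm_sq_le_of_charNum_eq_zero h hre
      rw [neg_zero, Real.exp_zero, abs_of_neg ha₂] at this
      linarith
    exact (Complex.abs_im_le_norm z).trans_lt (lt_of_pow_lt_pow_left₀ 2 pi_pos.le hnorm)
  rcases eq_or_ne z.im 0 with him | him
  · have hre_sq := re_sq_sub_im_sq_of_charNum_eq_zero h
    rw [him, Real.cos_zero] at hre_sq
    have : z.re = 0 := by
      nlinarith [Real.exp_le_one_iff.mpr (neg_nonpos.mpr hre)]
    exact hz (Complex.ext this him)
  · have hpos := mul_sin_pos_of_abs_lt_pi him him_lt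
    have hsin : Real.sin z.im ≠ 0 := fun h0 => by simp [h0] at hpos
    have key : 2 * z.re * (z.im * Real.sin z.im) =
        a * (Real.exp (-z.re) * Real.sin z.im ^ 2) := by
      linear_combination Real.sin z.im * two_mul_re_mul_im_of_charNum_eq_zero h
    have hrhs : a * (Real.exp (-z.re) * Real.sin z.im ^ 2) < 0 :=
      mul_neg_of_neg_of_pos ha₂ (by positivity)
    have hlhs : 0 ≤ 2 * z.re * (z.im * Real.sin z.im) := by positivity
    linarith

end RootsOfCharNum

lemma differentiable_charNum (a : ℝ) : Differentiable ℂ (charNum a) := by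
  unfold charNum
  fun_prop

lemma charNum_add (a : ℝ) (c w : ℂ) :
    charNum a (c + w) = (2 * c - a * Complex.exp (-c)) * w
      + (charNum a c + w ^ 2 + a * Complex.exp (-c) * (Complex.exp (-w) - 1 - -w)) := by
  simp only [charNum, neg_add, Complex.exp_add]
  ring

lemma exists_charNum_eq_zero_mem_ball (a : ℝ) (c : ℂ) {r : ℝ} (hr₀ : 0 < r) (hr₁ : r ≤ 1)
    (h : 2 * ‖charNum a c‖ + (1 + ‖a * Complex.exp (-c)‖) * r ^ 2 <
      ‖2 * c - a * Complex.exp (-c)‖ * r) :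
    ∃ z ∈ Metric.ball c r, charNum a z = 0 := by
  refine exists_mem_ball_eq_zero_of_norm_lt hr₀ (differentiable_charNum a).diffContOnCl ?_
  intro w hw
  obtain ⟨u, hu, rfl⟩ : ∃ u : ℂ, ‖u‖ = r ∧ w = c + u :=
    ⟨w - c, by rwa [← dist_eq_norm], by ring⟩
  set E := a * Complex.exp (-c)
  have hrem : ‖charNum a c + u ^ 2 + E * (Complex.exp (-u) - 1 - -u)‖ ≤
      ‖charNum a c‖ + r ^ 2 + ‖E‖ * r ^ 2 := by
    have hexp : ‖Complex.exp (-u) - 1 - -u‖ ≤ r ^ 2 := by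
      simpa only [norm_neg, hu] using
        Complex.norm_exp_sub_one_sub_id_le (x := -u) (by simpa [hu])
    calc _ ≤ ‖charNum a c‖ + ‖u ^ 2‖ + ‖E * (Complex.exp (-u) - 1 - -u)‖ := norm_add₃_le
      _ ≤ ‖charNum a c‖ + r ^ 2 + ‖E‖ * r ^ 2 := by
        rw [norm_mul, norm_pow, hu]
        gcongr
  have hlin : ‖2 * c - E‖ * r ≤ ‖charNum a (c + u)‖ +
      ‖charNum a c + u ^ 2 + E * (Complex.exp (-u) - 1 - -u)‖ := by
    rw [← hu, ← norm_mul, charNum_add]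
    exact norm_le_add_norm_add _ _
  linarith

lemma exists_charNum_eq_zero_im_pos {a L y : ℝ} (hcos : Real.cos y = -1)
    (hL : a * Real.exp L = -y ^ 2) (hLy : |L| ≤ y / 100) (hy : 100 ≤ y) (ha : -a ≤ y) :
    ∃ z, charNum a z = 0 ∧ 0 < z.im := by
  have ha₀ : a < 0 := by nlinarith [Real.exp_pos L]
  set c : ℂ := -L + y * Complex.I with hc
  have hsin : Real.sin y = 0 := Real.sin_eq_zero_iff_cos_eq.mpr (Or.inr hcos)
  have hE : a * Complex.exp (-c) = (y ^ 2 : ℝ) := by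
    have : -c = L + (-y : ℝ) * Complex.I := by push_cast; ring
    rw [this, Complex.exp_add, Complex.exp_mul_I, ← Complex.ofReal_cos, ← Complex.ofReal_sin,
      Real.cos_neg, Real.sin_neg, hcos, hsin, ← Complex.ofReal_exp, ← neg_eq_iff_eq_neg.mpr hL]
    push_cast
    ring
  have hcharNum : charNum a c = (L ^ 2 - a : ℝ) + (-2 * L * y : ℝ) * Complex.I := by
    rw [charNum, mul_sub, hE, hc]
    push_cast
    linear_combination (y : ℂ) ^ 2 * Complex.I_sq
  have hcharNum_le : ‖charNum a c‖ ≤ L ^ 2 - a + 2 * |L| * y := by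
    calc ‖charNum a c‖ ≤ |(charNum a c).re| + |(charNum a c).im| :=
          Complex.norm_le_abs_re_add_abs_im _
      _ = |L ^ 2 - a| + |-2 * L * y| := by
        simp only [hcharNum, Complex.add_re, Complex.add_im, Complex.ofReal_re, Complex.ofReal_im,
          Complex.re_ofReal_mul, Complex.im_ofReal_mul, Complex.I_re, Complex.I_im, mul_zero,
          mul_one, add_zero, zero_add]
      _ = L ^ 2 - a + 2 * |L| * y := by
        rw [abs_of_nonneg (by nlinarith), abs_mul, abs_mul, abs_of_pos (by linarith : 0 < y)]
        norm_num
  have hslope_ge : y ^ 2 - 2 * |L| ≤ ‖2 * c - (y ^ 2 : ℝ)‖ := by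
    calc y ^ 2 - 2 * |L| ≤ |-2 * L - y ^ 2| := by
          rw [abs_sub_comm]
          linarith [neg_abs_le L, le_abs_self (y ^ 2 - -2 * L)]
      _ = |(2 * c - (y ^ 2 : ℝ)).re| := by simp [hc, sq]
      _ ≤ ‖2 * c - (y ^ 2 : ℝ)‖ := Complex.abs_re_le_norm _
  obtain ⟨z, hz, hz0⟩ :=
    exists_charNum_eq_zero_mem_ball a c (r := 1 / 4) (by norm_num) (by norm_num) (by
      rw [hE, Complex.norm_real, Real.norm_eq_abs, abs_of_nonneg (by positivity)]
      nlinarith [sq_abs L, abs_nonneg L])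
  refine ⟨z, hz0, ?_⟩
  have := (Complex.abs_im_le_norm (z - c)).trans_lt (mem_ball_iff_norm.mp hz)
  simp only [hc, Complex.sub_im, Complex.add_im, Complex.neg_im, Complex.ofReal_im,
    Complex.mul_im, Complex.ofReal_re, Complex.I_re, Complex.I_im] at this
  linarith [(abs_lt.mp this).1]

open Filter Asymptotics in
lemma charRoots_nonempty {a : ℝ} (ha : a < 0) : (charRoots a).Nonempty := by
  have hlog : (fun y => 2 * Real.log y - Real.log (-a)) =o[atTop] id :=
    (isLittleO_log_id_atTop.const_mul_left 2).sub (isLittleO_const_id_atTop _)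
  have hev : ∀ᶠ y in atTop, |2 * Real.log y - Real.log (-a)| ≤ y / 100 ∧ 100 ≤ y ∧ -a ≤ y := by
    filter_upwards [hlog.bound (by norm_num : (0 : ℝ) < 1 / 100), eventually_ge_atTop 100,
      eventually_ge_atTop (-a)] with y hbound h100 hay
    rw [Real.norm_eq_abs, id, Real.norm_eq_abs, abs_of_pos (a := y) (by linarith)] at hbound
    exact ⟨by linarith, h100, hay⟩
  obtain ⟨Y, hY⟩ := eventually_atTop.mp hev
  obtain ⟨k, hk⟩ := exists_nat_ge Y
  set y := k * (2 * π) + π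
  obtain ⟨hLy, h100, hay⟩ := hY y (by nlinarith [pi_gt_three, Nat.cast_nonneg (α := ℝ) k])
  have hL : a * Real.exp (2 * Real.log y - Real.log (-a)) = -y ^ 2 := by
    rw [show 2 * Real.log y = Real.log (y ^ 2) by rw [Real.log_pow]; norm_num,
      ← Real.log_div (by positivity) (by linarith),
      Real.exp_log (div_pos (by positivity) (by linarith))]
    field_simp [ha.ne]
  obtain ⟨z, hz, him⟩ :=
    exists_charNum_eq_zero_im_pos (Real.cos_nat_mul_two_pi_add_pi k) hL hLy h100 hay
  exact ⟨z, mem_charRoots_of_charNum_eq_zero (fun h => by simp [h] at him) hz⟩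

lemma isCompact_setOf_mem_charRoots_le_re (a x : ℝ) :
    IsCompact {z ∈ charRoots a | x ≤ z.re} := by
  refine Metric.isCompact_of_isClosed_isBounded
    ((isClosed_charRoots a).inter (isClosed_le continuous_const Complex.continuous_re)) ?_
  refine (Metric.isBounded_closedBall (x := (0 : ℂ))
    (r := 1 + |a| * (1 + Real.exp (-x)))).subset ?_
  rintro z ⟨hz, hre⟩
  have := norm_sq_le_of_charNum_eq_zero (charNum_eq_zero_of_mem_charRoots hz) hre
  rw [mem_closedBall_zero_iff]
  nlinarith [norm_nonneg z]

lemma re_neg_of_mem_charRoots {a : ℝ} (ha₁ : -(π ^ 2) / 2 < a) (ha₂ : a < 0) {z : ℂ}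
    (hz : z ∈ charRoots a) : z.re < 0 :=
  re_neg_of_charNum_eq_zero ha₁ ha₂ (ne_of_mem_of_not_mem hz (zero_notMem_charRoots ha₂.ne))
    (charNum_eq_zero_of_mem_charRoots hz)

/-- If `a ∈ (−π²/2, 0)` then `v₀(a) < 0`. -/
theorem v0_neg_of_mem_Ioo (a : ℝ) (ha₁ : -(π ^ 2) / 2 < a) (ha₂ : a < 0) :
    v0 a < 0 := by
  obtain ⟨q, hq, hle_q⟩ :=
    (isCompact_setOf_mem_charRoots_le_re a (-1)).exists_lt_forall_le_of_forall_lt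
      Complex.continuous_re.continuousOn fun z hz => re_neg_of_mem_charRoots ha₁ ha₂ hz.1
  have hv0_le : v0 a ≤ max q (-1) := by
    refine csSup_le ((charRoots_nonempty ha₂).image _) ?_
    rintro _ ⟨z, hz, rfl⟩
    rcases le_or_gt (-1) z.re with hre | hre
    · exact (hle_q z ⟨hz, hre⟩).trans (le_max_left _ _)
    · exact hre.le.trans (le_max_right _ _)
  exact hv0_le.trans_lt (max_lt hq (by norm_num))
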